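/- Let (H,R,χ) be a pre-Cartier triangular Hopf algebra with antipode S. Then (m⊗Id)(S⊗ρˡ)(χ) = −χ, where ρˡ(a) = R⁻¹(1⊗a)R; explicitly, writing χ = χⁱ⊗χᵢ and R = Rʲ⊗Rⱼ with R⁻¹ = Rᵒᵖ, one has S(χⁱ)RⱼRᵏ ⊗ Rʲχᵢ Rₖ = −χⁱ⊗χᵢ. -/

import Mathlib

/-! Put `F(a ⊗ b ⊗ c) = S(a) b ⊗ c`, so that the left-hand side is `F(R⁻¹₂₃ χ₁₃ R₂₃)`. By the
second hexagon identity for `χ` this is `F((Δ ⊗ Id) χ) - F(χ₂₃) = 1 ⊗ (ε ⊗ Id) χ - χ`, by the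
antipode axiom `S(a₁) a₂ = ε(a)`. Applying `ε ⊗ Id ⊗ Id` to the same hexagon identity gives
`χ = χ + R⁻¹ (1 ⊗ (ε ⊗ Id) χ) R`, hence `1 ⊗ (ε ⊗ Id) χ = 0` since `R` is invertible. -/


open scoped TensorProduct

noncomputable section

variable (k H : Type*) [CommRing k] [Ring H] [HopfAlgebra k H]

/-- leg embedding `a ⊗ b ↦ a ⊗ b ⊗ 1` into `H ⊗ (H ⊗ H)`. -/
def leg12 : H ⊗[k] H →ₐ[k] H ⊗[k] (H ⊗[k] H) :=
  Algebra.TensorProduct.map (AlgHom.id k H) Algebra.TensorProduct.includeLeft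

/-- leg embedding `a ⊗ b ↦ 1 ⊗ a ⊗ b`. -/
def leg23 : H ⊗[k] H →ₐ[k] H ⊗[k] (H ⊗[k] H) :=
  Algebra.TensorProduct.includeRight

/-- leg embedding `a ⊗ b ↦ a ⊗ 1 ⊗ b`. -/
def leg13 : H ⊗[k] H →ₐ[k] H ⊗[k] (H ⊗[k] H) :=
  Algebra.TensorProduct.map (AlgHom.id k H) Algebra.TensorProduct.includeRight

/-- `(Id ⊗ Δ)` as an algebra map `H ⊗ H → H ⊗ (H ⊗ H)`. -/
def idComul : H ⊗[k] H →ₐ[k] H ⊗[k] (H ⊗[k] H) :=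
  Algebra.TensorProduct.map (AlgHom.id k H) (Bialgebra.comulAlgHom k H)

/-- `(Δ ⊗ Id)` as an algebra map `H ⊗ H → H ⊗ (H ⊗ H)` (after reassociation). -/
def comulId : H ⊗[k] H →ₐ[k] H ⊗[k] (H ⊗[k] H) :=
  (Algebra.TensorProduct.assoc k k k H H H).toAlgHom.comp
    (Algebra.TensorProduct.map (Bialgebra.comulAlgHom k H) (AlgHom.id k H))

/-- the flip `a ⊗ b ↦ b ⊗ a` as an algebra map. -/
def swapT : H ⊗[k] H →ₐ[k] H ⊗[k] H := (Algebra.TensorProduct.comm k H H).toAlgHom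

/-- A quasitriangular structure on the bialgebra `H`. -/
structure QT where
  R : H ⊗[k] H
  Rinv : H ⊗[k] H
  mul_inv : R * Rinv = 1
  inv_mul : Rinv * R = 1
  quasi_cocomm : ∀ h : H, swapT k H (Coalgebra.comul (R := k) h) * R = R * Coalgebra.comul (R := k) h
  hex1 : idComul k H R = leg13 k H R * leg12 k H R
  hex2 : comulId k H R = leg13 k H R * leg23 k H R

/-- A pre-Cartier quasitriangular bialgebra structure on `H`. -/
structure PreCartier extends QT k H where
  χ : H ⊗[k] H
  chi_comm : ∀ h : H, χ * Coalgebra.comul (R := k) h = Coalgebra.comul (R := k) h * χ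
  chi_hex1 : idComul k H χ = leg12 k H χ + leg12 k H Rinv * leg13 k H χ * leg12 k H R
  chi_hex2 : comulId k H χ = leg23 k H χ + leg23 k H Rinv * leg13 k H χ * leg23 k H R

section

variable {k H : Type*} [CommSemiring k] [Semiring H] [Bialgebra k H]

def counitLeg1 : H ⊗[k] (H ⊗[k] H) →ₐ[k] H ⊗[k] H :=
  (Algebra.TensorProduct.lid k (H ⊗[k] H)).toAlgHom.comp
    (Algebra.TensorProduct.map (Bialgebra.counitAlgHom k H) (AlgHom.id k (H ⊗[k] H)))

@[simp]
lemma counitLeg1_tmul (a : H) (x : H ⊗[k] H) :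
    counitLeg1 (a ⊗ₜ[k] x) = Coalgebra.counit (R := k) a • x := by
  simp [counitLeg1]

end

section

open TensorProduct LinearMap

variable {k H}

def antipodeMul12 : H ⊗[k] (H ⊗[k] H) →ₗ[k] H ⊗[k] H :=
  rTensor H (mul' k H) ∘ₗ (TensorProduct.assoc k H H H).symm.toLinearMap ∘ₗ
    rTensor (H ⊗[k] H) (HopfAlgebra.antipode k)

@[simp]
lemma antipodeMul12_tmul (a b c : H) :
    antipodeMul12 (a ⊗ₜ[k] (b ⊗ₜ[k] c)) = (HopfAlgebra.antipode k a * b) ⊗ₜ[k] c := by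
  simp [antipodeMul12]

lemma comulId_toLinearMap : (comulId k H).toLinearMap =
    (TensorProduct.assoc k H H H).toLinearMap ∘ₗ rTensor H (Coalgebra.comul (R := k)) := rfl

lemma antipodeMul12_comp_assoc :
    antipodeMul12 ∘ₗ (TensorProduct.assoc k H H H).toLinearMap =
      rTensor H (mul' k H ∘ₗ rTensor H (HopfAlgebra.antipode k)) :=
  TensorProduct.ext_threefold fun _ _ _ ↦ by simp

lemma counitLeg1_comp_assoc :
    (counitLeg1 (k := k) (H := H)).toLinearMap ∘ₗ (TensorProduct.assoc k H H H).toLinearMap =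
      rTensor H ((TensorProduct.lid k H).toLinearMap ∘ₗ rTensor H (Coalgebra.counit (R := k))) :=
  TensorProduct.ext_threefold fun _ _ _ ↦ by simp [TensorProduct.smul_tmul']

lemma antipodeMul12_leg23 (x : H ⊗[k] H) : antipodeMul12 (leg23 k H x) = x := by
  induction x using TensorProduct.induction_on with
  | zero => simp
  | tmul a b => simp [leg23]
  | add x y hx hy => rw [map_add, map_add, hx, hy]

lemma counitLeg1_leg23 (x : H ⊗[k] H) : counitLeg1 (leg23 k H x) = x := by
  simp [leg23]

lemma counitLeg1_comp_comulId :
    (counitLeg1 (k := k) (H := H)).toLinearMap ∘ₗ (comulId k H).toLinearMap = LinearMap.id := by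
  rw [comulId_toLinearMap, ← comp_assoc, counitLeg1_comp_assoc, ← rTensor_comp, comp_assoc,
    Coalgebra.rTensor_counit_comp_comul]
  ext
  simp

lemma counitLeg1_comulId (x : H ⊗[k] H) : counitLeg1 (comulId k H x) = x :=
  LinearMap.congr_fun counitLeg1_comp_comulId x

lemma counitLeg1_comp_leg13 :
    (counitLeg1 (k := k) (H := H)).toLinearMap ∘ₗ (leg13 k H).toLinearMap =
      rTensor H (Algebra.linearMap k H ∘ₗ Coalgebra.counit) := by
  ext
  simp [leg13, Algebra.smul_def]

lemma antipodeMul12_comp_comulId :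
    antipodeMul12 ∘ₗ (comulId k H).toLinearMap =
      (counitLeg1 (k := k) (H := H)).toLinearMap ∘ₗ (leg13 k H).toLinearMap := by
  rw [comulId_toLinearMap, ← comp_assoc, antipodeMul12_comp_assoc, ← rTensor_comp, comp_assoc,
    HopfAlgebra.mul_antipode_rTensor_comul, counitLeg1_comp_leg13]

lemma antipodeMul12_comulId (x : H ⊗[k] H) :
    antipodeMul12 (comulId k H x) = counitLeg1 (leg13 k H x) :=
  LinearMap.congr_fun antipodeMul12_comp_comulId x

lemma lTensor_conj_includeRight (r r' x : H ⊗[k] H) :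
    lTensor H (mulRight k r ∘ₗ mulLeft k r' ∘ₗ
      (Algebra.TensorProduct.includeRight : H →ₐ[k] H ⊗[k] H).toLinearMap) x =
      leg23 k H r' * leg13 k H x * leg23 k H r := by
  induction x using TensorProduct.induction_on with
  | zero => simp
  | tmul a b => simp [leg13, leg23, Algebra.TensorProduct.tmul_mul_tmul]
  | add x y hx hy => rw [map_add, hx, hy, map_add, mul_add, add_mul]

lemma PreCartier.counitLeg1_leg13_chi_eq_zero (P : PreCartier k H) :
    counitLeg1 (leg13 k H P.χ) = 0 := by
  have hconj := congrArg counitLeg1 P.chi_hex2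
  rw [map_add, map_mul, map_mul, counitLeg1_leg23, counitLeg1_leg23, counitLeg1_leg23,
    counitLeg1_comulId, left_eq_add] at hconj
  calc counitLeg1 (leg13 k H P.χ)
      = P.R * (P.Rinv * counitLeg1 (leg13 k H P.χ) * P.R) * P.Rinv := by
        rw [← mul_assoc, ← mul_assoc, P.mul_inv, one_mul, mul_assoc, P.mul_inv, mul_one]
    _ = 0 := by rw [hconj, mul_zero, zero_mul]

end

theorem antipode_rho_l_chi (P : PreCartier k H) :
    let S : H →ₗ[k] H := HopfAlgebra.antipode k
    let ρl : H →ₗ[k] H ⊗[k] H :=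
      (LinearMap.mulRight k P.R).comp ((LinearMap.mulLeft k P.Rinv).comp
        (Algebra.TensorProduct.includeRight : H →ₐ[k] H ⊗[k] H).toLinearMap)
    ((LinearMap.rTensor H (LinearMap.mul' k H)).comp
      ((TensorProduct.assoc k H H H).symm.toLinearMap.comp (TensorProduct.map S ρl))) P.χ
      = -P.χ := by
  intro S ρl
  have hconj : leg23 k H P.Rinv * leg13 k H P.χ * leg23 k H P.R =
      comulId k H P.χ - leg23 k H P.χ := by
    rw [P.chi_hex2, add_sub_cancel_left]
  calc _ = antipodeMul12 (LinearMap.lTensor H ρl P.χ) := by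
        rw [← LinearMap.rTensor_comp_lTensor]; rfl
    _ = antipodeMul12 (comulId k H P.χ) - antipodeMul12 (leg23 k H P.χ) := by
        rw [lTensor_conj_includeRight, hconj, map_sub]
    _ = -P.χ := by
        rw [antipodeMul12_comulId, P.counitLeg1_leg13_chi_eq_zero, antipodeMul12_leg23, zero_sub]
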